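/- Let G be a finitely generated residually finite infinite group. Then G has arbitrarily large finite quotients, and hence for every positive integer n admits a finite generating set with respect to which its dead-end depth is at least n. -/
import Mathlib


/-- Word length of `g` with respect to generating set `S` (using `S ∪ S⁻¹`). -/
noncomputable def wl {G : Type*} [Group G] (S : Set G) (g : G) : ℕ :=
  sInf {n | ∃ l : List G, (∀ x ∈ l, x ∈ S ∨ x⁻¹ ∈ S) ∧ l.length = n ∧ l.prod = g}

/-- Word metric with respect to `S`. -/
noncomputable def wdist {G : Type*} [Group G] (S : Set G) (g h : G) : ℕ := wl S (g⁻¹ * h)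

/-- Dead-end depth of `g` with respect to `A`: distance to the nearest element strictly
farther from the identity, `⊤` if none exists. -/
noncomputable def depth {G : Type*} [Group G] (A : Set G) (g : G) : ℕ∞ :=
  sInf ((fun g' => (wdist A g g' : ℕ∞)) '' {g' | wl A g < wl A g'})

/-- Partial product `u 0 * u 1 * ⋯ * u (i-1)`. -/
def pprod {M : Type*} [Monoid M] (u : ℕ → M) (i : ℕ) : M := ((List.range i).map u).prod

section DeadEndAux

variable {G : Type*} [Group G]

lemma wl_le' {S : Set G} {g : G} {l : List G} (hl : ∀ x ∈ l, x ∈ S ∨ x⁻¹ ∈ S)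
    (hp : l.prod = g) : wl S g ≤ l.length :=
  Nat.sInf_le ⟨l, hl, rfl, hp⟩

lemma exists_word {S : Set G} (hS : Subgroup.closure S = ⊤) (g : G) :
    ∃ l : List G, (∀ x ∈ l, x ∈ S ∨ x⁻¹ ∈ S) ∧ l.prod = g := by
  have hg : g ∈ Submonoid.closure (S ∪ S⁻¹) := by
    rw [← Subgroup.closure_toSubmonoid]
    rw [Subgroup.mem_toSubmonoid, hS]
    exact Subgroup.mem_top g
  obtain ⟨l, hl, hp⟩ := Submonoid.exists_list_of_mem_closure hg
  refine ⟨l, fun x hx => ?_, hp⟩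
  rcases hl x hx with h | h
  · exact Or.inl h
  · exact Or.inr (Set.mem_inv.mp h)

lemma wl_spec {S : Set G} {g : G}
    (h : ∃ l : List G, (∀ x ∈ l, x ∈ S ∨ x⁻¹ ∈ S) ∧ l.prod = g) :
    ∃ l : List G, (∀ x ∈ l, x ∈ S ∨ x⁻¹ ∈ S) ∧ l.length = wl S g ∧ l.prod = g := by
  obtain ⟨l, hl, hp⟩ := h
  exact Nat.sInf_mem (⟨l.length, l, hl, rfl, hp⟩ :
    Set.Nonempty {n | ∃ l : List G, (∀ x ∈ l, x ∈ S ∨ x⁻¹ ∈ S) ∧ l.length = n ∧ l.prod = g})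

lemma wl_one (S : Set G) : wl S (1 : G) = 0 :=
  Nat.le_zero.mp (wl_le' (l := []) (by simp) (by simp))

lemma wl_mul_le {S : Set G} (hS : Subgroup.closure S = ⊤) (g h : G) :
    wl S (g * h) ≤ wl S g + wl S h := by
  obtain ⟨l₁, hl₁, hlen₁, hp₁⟩ := wl_spec (exists_word hS g)
  obtain ⟨l₂, hl₂, hlen₂, hp₂⟩ := wl_spec (exists_word hS h)
  have := wl_le' (S := S) (g := g * h) (l := l₁ ++ l₂)
    (fun x hx => by rcases List.mem_append.mp hx with h' | h'; exacts [hl₁ x h', hl₂ x h'])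
    (by rw [List.prod_append, hp₁, hp₂])
  simpa [hlen₁, hlen₂] using this

lemma wl_inv {S : Set G} (hS : Subgroup.closure S = ⊤) (g : G) :
    wl S g⁻¹ = wl S g := by
  have key : ∀ a : G, wl S a⁻¹ ≤ wl S a := by
    intro a
    obtain ⟨l, hl, hlen, hp⟩ := wl_spec (exists_word hS a)
    have := wl_le' (S := S) (g := a⁻¹) (l := (l.map fun x => x⁻¹).reverse)
      (fun x hx => by
        simp only [List.mem_reverse, List.mem_map] at hx
        obtain ⟨y, hy, rfl⟩ := hx
        rcases hl y hy with h | h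
        · exact Or.inr (by simpa using h)
        · exact Or.inl h)
      (by rw [← List.prod_inv_reverse, hp])
    simpa [hlen] using this
  exact le_antisymm (by simpa using key g⁻¹) (key g) |>.symm ▸ rfl


lemma wl_prod_le {S : Set G} (hS : Subgroup.closure S = ⊤) {L : ℕ} :
    ∀ l : List G, (∀ x ∈ l, wl S x ≤ L) → wl S l.prod ≤ l.length * L := by
  intro l
  induction l with
  | nil => intro _; simp [wl_one]
  | cons x t ih =>
      intro hx
      rw [List.prod_cons]
      calc wl S (x * t.prod) ≤ wl S x + wl S t.prod := wl_mul_le hS _ _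
        _ ≤ L + t.length * L := by
            exact Nat.add_le_add (hx x (by simp)) (ih fun y hy => hx y (by simp [hy]))
        _ = (t.length + 1) * L := by ring
        _ = (x :: t).length * L := by simp

lemma ball_finite {S : Set G} (hfin : S.Finite) (hS : Subgroup.closure S = ⊤) (L : ℕ) :
    {g : G | wl S g ≤ L}.Finite := by
  induction L with
  | zero =>
      refine Set.Finite.subset (Set.finite_singleton 1) ?_
      intro g hg
      have hg0 : wl S g = 0 := Nat.le_zero.mp hg
      obtain ⟨l, _, hlen, hp⟩ := wl_spec (exists_word hS g)
      have : l.length = 0 := by omega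
      have : l = [] := List.length_eq_zero_iff.mp this
      simp [this] at hp
      simp [← hp]
  | succ L ih =>
      refine Set.Finite.subset (ih.union (ih.mul (hfin.union hfin.inv))) ?_
      intro g hg
      obtain ⟨l, hl, hlen, hp⟩ := wl_spec (exists_word hS g)
      by_cases hle : wl S g ≤ L
      · exact Or.inl hle
      · have hlen' : l.length = L + 1 := by
          have : wl S g ≤ L + 1 := hg
          omega
        have hne : l ≠ [] := by
          intro h; rw [h] at hlen'; simp at hlen'
        right
        have hgeq : l.dropLast.prod * l.getLast hne = g := by
          have hcat : l.dropLast ++ [l.getLast hne] = l := List.dropLast_append_getLast hne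
          calc l.dropLast.prod * l.getLast hne
              = (l.dropLast ++ [l.getLast hne]).prod := by rw [List.prod_append]; simp
            _ = g := by rw [hcat, hp]
        refine hgeq ▸ Set.mul_mem_mul ?_ ?_
        · have h1 : wl S l.dropLast.prod ≤ l.dropLast.length :=
            wl_le' (fun x hx => hl x (List.mem_of_mem_dropLast hx)) rfl
          have h2 : l.dropLast.length = L := by simp [List.length_dropLast, hlen']
          exact Set.mem_setOf.mpr (by omega)
        · rcases hl _ (List.getLast_mem hne) with h | h
          · exact Set.mem_union_left _ h
          · exact Set.mem_union_right _ (Set.mem_inv.mpr h)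


lemma key_lemma {Q : Type} [Group Q] (π : G →* Q) {S : Set G}
    (hS : Subgroup.closure S = ⊤) (Abar : Set Q)
    (hone : (1 : Q) ∈ Abar) (hsym : ∀ y : Q, y ∈ Abar → y⁻¹ ∈ Abar)
    (hQword : ∀ q : Q, ∃ l : List Q, (∀ y ∈ l, y ∈ Abar ∨ y⁻¹ ∈ Abar) ∧ l.prod = q)
    (rep : Q → G) (hrep : ∀ q, π (rep q) = q) (ρ D : ℕ)
    (hρ : ∀ q, wl S (rep q) ≤ ρ)
    (hAtop : Subgroup.closure {x : G | π x ∈ Abar ∧ wl S x ≤ D + 2 * ρ} = ⊤) :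
    ∀ m : ℕ, 1 ≤ m → ∀ g : G, wl Abar (π g) ≤ m → wl S g ≤ m * D + ρ →
      wl {x : G | π x ∈ Abar ∧ wl S x ≤ D + 2 * ρ} g ≤ m := by
  set A : Set G := {x : G | π x ∈ Abar ∧ wl S x ≤ D + 2 * ρ} with hA
  -- a single element of A is a word of length 1
  have hmemA : ∀ g : G, g ∈ A → wl A g ≤ 1 := by
    intro g hg
    have := wl_le' (S := A) (g := g) (l := [g]) (by simpa using Or.inl hg) (by simp)
    simpa using this
  -- letters of an Abar-word of length ≤ 1 are in Abar
  have habar1 : ∀ q : Q, wl Abar q ≤ 1 → q ∈ Abar := by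
    intro q hq
    obtain ⟨v, hv, hvlen, hvp⟩ := wl_spec (hQword q)
    match v, hvlen, hvp with
    | [], _, hvp => simpa [← hvp] using hone
    | [y], _, hvp =>
        have : y ∈ Abar := by
          rcases hv y (by simp) with h | h
          · exact h
          · simpa using hsym _ h
        simpa [← hvp] using this
    | y :: z :: t, hvlen, _ => simp at hvlen; omega
  intro m hm
  induction m, hm using Nat.le_induction with
  | base =>
      intro g hgQ hgS
      refine hmemA g ⟨habar1 _ hgQ, ?_⟩
      simp only [one_mul] at hgS
      omega
  | succ m hm ih =>
      intro g hgQ hgS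
      -- S-word for g
      obtain ⟨l, hl, hlen, hp⟩ := wl_spec (exists_word hS g)
      set ℓ := l.length with hℓ
      set t := min ℓ (D + ρ) with ht
      have htℓ : t ≤ ℓ := min_le_left _ _
      have htD : t ≤ D + ρ := min_le_right _ _
      have hchoice : t = ℓ ∨ t = D + ρ := min_choice _ _
      have hℓle : ℓ ≤ (m + 1) * D + ρ := by rw [hlen]; exact hgS
      have hcut : ℓ - t ≤ m * D := by
        rcases hchoice with h | h
        · omega
        · have : (m + 1) * D = m * D + D := by ring
          omega
      set l₁ := l.take (ℓ - t) with hl₁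
      set l₂ := l.drop (ℓ - t) with hl₂
      have hlen₁ : l₁.length = ℓ - t := by
        rw [hl₁, List.length_take]; omega
      have hlen₂ : l₂.length = t := by
        rw [hl₂, List.length_drop]; omega
      set h₀ := l₁.prod with hh₀
      set w := l₂.prod with hw
      have hsplit : h₀ * w = g := by
        rw [hh₀, hw, ← List.prod_append, hl₁, hl₂, List.take_append_drop, hp]
      have hwlh₀ : wl S h₀ ≤ ℓ - t := by
        have h2 := wl_le' (g := h₀) (fun x hx => hl x (List.take_subset _ _ hx)) hh₀.symm
        rw [← hl₁, hlen₁] at h2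
        exact h2
      have hwlw : wl S w ≤ t := by
        have h2 := wl_le' (g := w) (fun x hx => hl x (List.drop_subset _ _ hx)) hw.symm
        rw [← hl₂, hlen₂] at h2
        exact h2
      -- Abar-word for π g, padded to length m + 1
      obtain ⟨v, hv, hvlen, hvp⟩ := wl_spec (hQword (π g))
      set v' := List.replicate (m + 1 - v.length) (1 : Q) ++ v with hv'
      have hv'cond : ∀ y ∈ v', y ∈ Abar ∨ y⁻¹ ∈ Abar := by
        intro y hy
        rcases List.mem_append.mp hy with h | h
        · left; rw [List.eq_of_mem_replicate h]; exact hone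
        · exact hv y h
      have hv'len : v'.length = m + 1 := by
        rw [hv', List.length_append, List.length_replicate]
        have : v.length ≤ m + 1 := by rw [hvlen]; exact hgQ
        omega
      have hv'p : v'.prod = π g := by
        rw [hv', List.prod_append, List.prod_replicate, one_pow, one_mul, hvp]
      have hv'ne : v' ≠ [] := by
        intro h; rw [h] at hv'len; simp at hv'len
      set u := v'.dropLast.prod with hu
      set y := v'.getLast hv'ne with hy
      have hQsplit : u * y = π g := by
        have hcat : v'.dropLast ++ [y] = v' := List.dropLast_append_getLast hv'ne
        calc u * y = (v'.dropLast ++ [y]).prod := by rw [List.prod_append]; simp [hu]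
          _ = π g := by rw [hcat, hv'p]
      have hyA : y ∈ Abar := by
        rcases hv'cond y (hy ▸ List.getLast_mem hv'ne) with h | h
        · exact h
        · simpa using hsym _ h
      have huwl : wl Abar u ≤ m := by
        have h1 := wl_le' (g := u) (fun x hx => hv'cond x (List.mem_of_mem_dropLast hx)) hu.symm
        have hdl : v'.dropLast.length = m := by
          rw [List.length_dropLast, hv'len]
          omega
        omega
      -- the correcting element and the two pieces
      set c := rep ((π h₀)⁻¹ * u) with hc
      have hπc : π c = (π h₀)⁻¹ * u := hrep _
      have hcwl : wl S c ≤ ρ := hρ _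
      set hh := h₀ * c with hhh
      have hhS : wl S hh ≤ m * D + ρ := by
        rw [hhh]
        have := wl_mul_le hS h₀ c
        omega
      have hhQ : wl Abar (π hh) ≤ m := by
        have : π hh = u := by
          rw [hhh, map_mul, hπc, mul_inv_cancel_left]
        rw [this]; exact huwl
      have hIH : wl A hh ≤ m := ih hh hhQ hhS
      set p := c⁻¹ * w with hp'
      have hpS : wl S p ≤ D + 2 * ρ := by
        rw [hp']
        have h1 := wl_mul_le hS c⁻¹ w
        have h2 : wl S c⁻¹ = wl S c := wl_inv hS c
        omega
      have hπw : π w = (π h₀)⁻¹ * π g := by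
        have : π h₀ * π w = π g := by rw [← map_mul, hsplit]
        rw [← this, inv_mul_cancel_left]
      have hπp : π p = y := by
        rw [hp', map_mul, map_inv, hπc, hπw, ← hQsplit]
        group
      have hpA : p ∈ A := ⟨by rw [hπp]; exact hyA, hpS⟩
      have hfin : hh * p = g := by
        rw [hhh, hp', mul_assoc, mul_inv_cancel_left, hsplit]
      calc wl A g = wl A (hh * p) := by rw [hfin]
        _ ≤ wl A hh + wl A p := wl_mul_le hAtop _ _
        _ ≤ m + 1 := Nat.add_le_add hIH (hmemA p hpA)


lemma part1' {G : Type*} [Group G] [Infinite G]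
    (hrf : ∀ g : G, g ≠ 1 → ∃ (Q : Type) (_ : Group Q) (_ : Finite Q) (π : G →* Q),
      Function.Surjective π ∧ π g ≠ 1) (m : ℕ) :
    ∃ (Q : Type) (_ : Group Q) (_ : Finite Q) (π : G →* Q),
      Function.Surjective π ∧ m ≤ Nat.card Q := by
  classical
  set gi : Fin m → G := fun i => Infinite.natEmbedding G i.val with hgi
  have hginj : Function.Injective gi := fun i j h => by
    have := (Infinite.natEmbedding G).injective h
    exact Fin.val_injective this
  have hne : ∀ p : {p : Fin m × Fin m // p.1 ≠ p.2}, gi p.1.1 * (gi p.1.2)⁻¹ ≠ 1 := by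
    intro p h
    exact p.2 (hginj (mul_inv_eq_one.mp h))
  choose Qf instG instF πf hsurj hne1 using fun p => hrf _ (hne p)
  letI : ∀ p, Group (Qf p) := instG
  letI : ∀ p, Finite (Qf p) := instF
  let Φ : G →* (∀ p, Qf p) :=
    { toFun := fun g p => πf p g
      map_one' := by funext p; simp
      map_mul' := fun a b => by funext p; simp }
  refine ⟨Φ.range, inferInstance, inferInstance, Φ.rangeRestrict,
    Φ.rangeRestrict_surjective, ?_⟩
  have hinjψ : Function.Injective (fun i : Fin m => Φ.rangeRestrict (gi i)) := by
    intro i j hij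
    by_contra hij'
    have h1 : Φ (gi i) = Φ (gi j) := congrArg Subtype.val hij
    have h2 : πf ⟨(i, j), hij'⟩ (gi i) = πf ⟨(i, j), hij'⟩ (gi j) := congrFun h1 _
    exact hne1 ⟨(i, j), hij'⟩ (by rw [map_mul, map_inv, h2, mul_inv_cancel])
  simpa using Nat.card_le_card_of_injective _ hinjψ

end DeadEndAux

/-- A finitely generated infinite residually finite group has arbitrarily large finite
quotients, and hence for every positive `n` admits a finite generating set with respect to
which its dead-end depth is at least `n`. -/
theorem stmt19 {G : Type*} [Group G] [Group.FG G] [Infinite G]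
    (hrf : ∀ g : G, g ≠ 1 → ∃ (Q : Type) (_ : Group Q) (_ : Finite Q) (π : G →* Q),
      Function.Surjective π ∧ π g ≠ 1) :
    (∀ m : ℕ, ∃ (Q : Type) (_ : Group Q) (_ : Finite Q) (π : G →* Q),
      Function.Surjective π ∧ m ≤ Nat.card Q) ∧
    ∀ n : ℕ, 0 < n → ∃ A : Set G, A.Finite ∧ Subgroup.closure A = ⊤ ∧
      (n : ℕ∞) ≤ ⨆ g : G, depth A g := by
  classical
  refine ⟨part1' hrf, ?_⟩
  intro n hn
  obtain ⟨k, rfl⟩ : ∃ k, n = k + 1 := ⟨n - 1, by omega⟩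
  set n := k + 1
  -- finite generating set
  obtain ⟨S, hStop, hSfin⟩ := Group.fg_iff.mp ‹Group.FG G›
  -- a large finite quotient
  obtain ⟨Q, _, _, π, hπsurj, hcard⟩ :=
    part1' hrf (Nat.card ↥{g : G | wl S g ≤ n} + 1)
  -- the image generating set of Q
  set S₁ : Set G := S ∪ S⁻¹ ∪ {1} with hS₁
  set Abar : Set Q := π '' S₁ with hAbar
  have hS₁sym : ∀ x : G, x ∈ S₁ → x⁻¹ ∈ S₁ := by
    intro x hx
    rcases hx with (h | h) | h
    · exact Or.inl (Or.inr (Set.mem_inv.mpr (by simpa using h)))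
    · exact Or.inl (Or.inl (Set.mem_inv.mp h))
    · simp only [Set.mem_singleton_iff] at h
      exact Or.inr (by simp [h])
  have hone : (1 : Q) ∈ Abar := ⟨1, Or.inr rfl, map_one π⟩
  have hsym : ∀ y : Q, y ∈ Abar → y⁻¹ ∈ Abar := by
    rintro y ⟨x, hx, rfl⟩
    exact ⟨x⁻¹, hS₁sym x hx, map_inv π x⟩
  have hQword : ∀ q : Q, ∃ l : List Q, (∀ y ∈ l, y ∈ Abar ∨ y⁻¹ ∈ Abar) ∧ l.prod = q := by
    intro q
    obtain ⟨g, rfl⟩ := hπsurj q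
    obtain ⟨l, hl, hp⟩ := exists_word hStop g
    refine ⟨l.map π, ?_, by rw [← hp]; exact (map_list_prod π l).symm⟩
    intro y hy
    obtain ⟨x, hx, rfl⟩ := List.mem_map.mp hy
    rcases hl x hx with h | h
    · exact Or.inl ⟨x, Or.inl (Or.inl h), rfl⟩
    · exact Or.inr ⟨x⁻¹, Or.inl (Or.inl h), map_inv π x⟩
  -- section of π
  set rep : Q → G := fun q => if q = 1 then 1 else Function.surjInv hπsurj q with hrepdef
  have hrep : ∀ q, π (rep q) = q := by
    intro q
    by_cases h : q = 1
    · simp [hrepdef, h]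
    · simp [hrepdef, h, Function.surjInv_eq hπsurj]
  obtain ⟨qm, hqm⟩ := Finite.exists_max (fun q : Q => wl S (rep q))
  set ρ : ℕ := max 1 (wl S (rep qm)) with hρdef
  have hρ : ∀ q, wl S (rep q) ≤ ρ := fun q => le_trans (hqm q) (le_max_right _ _)
  have hρ1 : 1 ≤ ρ := le_max_left _ _
  -- the farthest element of Q
  obtain ⟨q₀, hq₀⟩ := Finite.exists_max (fun q : Q => wl Abar q)
  set R : ℕ := wl Abar q₀ with hRdef
  -- letters lift to short elements of G
  have hlift : ∀ y : Q, (y ∈ Abar ∨ y⁻¹ ∈ Abar) →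
      ∃ x : G, x ∈ S₁ ∧ π x = y := by
    intro y hy
    rcases hy with ⟨x, hx, rfl⟩ | ⟨x, hx, hx'⟩
    · exact ⟨x, hx, rfl⟩
    · exact ⟨x⁻¹, hS₁sym x hx, by rw [map_inv, hx', inv_inv]⟩
  have hwlS₁ : ∀ x : G, x ∈ S₁ → wl S x ≤ 1 := by
    intro x hx
    rcases hx with (h | h) | h
    · simpa using wl_le' (l := [x]) (by simpa using Or.inl h) (by simp)
    · simpa using wl_le' (l := [x]) (by simpa using Or.inr (Set.mem_inv.mp h)) (by simp)
    · simp only [Set.mem_singleton_iff] at h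
      simp [h, wl_one]
  -- every element of Q has a representative of length ≤ its Abar-length
  have hshortrep : ∀ q : Q, ∃ x : G, π x = q ∧ wl S x ≤ wl Abar q := by
    intro q
    obtain ⟨v, hv, hvlen, hvp⟩ := wl_spec (hQword q)
    choose f hf1 hf2 using fun (y : {y : Q // y ∈ v}) => hlift y.1 (hv y.1 y.2)
    refine ⟨(v.attach.map f).prod, ?_, ?_⟩
    · rw [map_list_prod]
      have : (v.attach.map f).map π = v := by
        rw [List.map_map]
        have : v.attach.map (π ∘ f) = v.attach.map Subtype.val := by
          apply List.map_congr_left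
          intro a _
          exact hf2 a
        rw [this, List.attach_map_subtype_val]
      rw [this, hvp]
    · have hb := wl_prod_le hStop (L := 1) (v.attach.map f) ?_
      · have hlen : (v.attach.map f).length = v.length := by simp
        rw [hlen, hvlen, mul_one] at hb
        exact hb
      · intro x hx
        obtain ⟨a, _, rfl⟩ := List.mem_map.mp hx
        exact hwlS₁ (f a) (hf1 a)
  -- R is large
  have hR : n + 1 ≤ R := by
    by_contra hlt
    push_neg at hlt
    have hRn : R ≤ n := by omega
    have hφ : ∀ q : Q, ∃ x : G, π x = q ∧ wl S x ≤ n := by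
      intro q
      obtain ⟨x, hx1, hx2⟩ := hshortrep q
      exact ⟨x, hx1, le_trans hx2 (le_trans (hq₀ q) hRn)⟩
    choose φ hφ1 hφ2 using hφ
    have : Finite ↥{g : G | wl S g ≤ n} := (ball_finite hSfin hStop n).to_subtype
    have hinj : Function.Injective (fun q : Q => (⟨φ q, hφ2 q⟩ : ↥{g : G | wl S g ≤ n})) := by
      intro q₁ q₂ h
      have : φ q₁ = φ q₂ := congrArg Subtype.val h
      rw [← hφ1 q₁, ← hφ1 q₂, this]
    have hle := Nat.card_le_card_of_injective _ hinj
    have hbridge : Nat.card ↥{g : G | wl S g ≤ n} =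
        Nat.card { x // x ∈ {g : G | wl S g ≤ n} } := rfl
    omega
  have hR1 : 1 ≤ R := by omega
  -- the generating set A
  set D : ℕ := n * ρ with hDdef
  set A : Set G := {x : G | π x ∈ Abar ∧ wl S x ≤ D + 2 * ρ} with hAdef
  have hSA : S ⊆ A := by
    intro s hs
    refine ⟨⟨s, Or.inl (Or.inl hs), rfl⟩, ?_⟩
    have h1 := hwlS₁ s (Or.inl (Or.inl hs))
    have h2 : 1 ≤ ρ := hρ1
    omega
  have hAtop : Subgroup.closure A = ⊤ := by
    rw [eq_top_iff, ← hStop]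
    exact Subgroup.closure_mono hSA
  have hAfin : A.Finite := by
    refine Set.Finite.subset (ball_finite hSfin hStop (D + 2 * ρ)) ?_
    intro x hx
    exact hx.2
  -- the lower bound on A-length
  have hlow : ∀ g : G, wl Abar (π g) ≤ wl A g := by
    intro g
    obtain ⟨l, hl, hlen, hp⟩ := wl_spec (exists_word hAtop g)
    have := wl_le' (S := Abar) (g := π g) (l := l.map π) ?_ (by rw [← hp]; exact (map_list_prod π l).symm)
    · simpa [hlen] using this
    · intro y hy
      obtain ⟨x, hx, rfl⟩ := List.mem_map.mp hy
      rcases hl x hx with h | h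
      · exact Or.inl h.1
      · exact Or.inr (by rw [← map_inv]; exact h.1)
  -- the deep element
  set g₀ : G := rep q₀ with hg₀def
  have hg₀Q : π g₀ = q₀ := hrep q₀
  have hkey := key_lemma π hStop Abar hone hsym hQword rep hrep ρ D hρ hAtop
  have hg₀up : wl A g₀ ≤ R := by
    refine hkey R hR1 g₀ (by rw [hg₀Q]) ?_
    calc wl S g₀ ≤ ρ := hρ q₀
      _ ≤ R * D + ρ := by omega
  have hg₀low : R ≤ wl A g₀ := by
    have := hlow g₀
    rwa [hg₀Q] at this
  -- neighbors of g₀ are short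
  have hnbr : ∀ g' : G, wl A (g₀⁻¹ * g') < n → wl A g' ≤ R := by
    intro g' hd
    obtain ⟨l, hl, hlen, hp⟩ := wl_spec (exists_word hAtop (g₀⁻¹ * g'))
    have hlet : ∀ x ∈ l, wl S x ≤ D + 2 * ρ := by
      intro x hx
      rcases hl x hx with h | h
      · exact h.2
      · rw [← wl_inv hStop]; exact h.2
    have hS' : wl S g' ≤ ρ + k * (D + 2 * ρ) := by
      have h1 : g' = g₀ * l.prod := by rw [hp, mul_inv_cancel_left]
      have h2 := wl_mul_le hStop g₀ l.prod
      have h3 := wl_prod_le hStop l hlet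
      have h4 : l.length ≤ k := by omega
      have h5 : l.length * (D + 2 * ρ) ≤ k * (D + 2 * ρ) :=
        Nat.mul_le_mul_right _ h4
      have h6 : wl S g₀ ≤ ρ := hρ q₀
      rw [h1]
      calc wl S (g₀ * l.prod) ≤ wl S g₀ + wl S l.prod := h2
        _ ≤ ρ + k * (D + 2 * ρ) := by omega
    refine hkey R hR1 g' (hq₀ (π g')) ?_
    calc wl S g' ≤ ρ + k * (D + 2 * ρ) := hS'
        _ ≤ R * D + ρ := by
            have hkk : k * (D + 2 * ρ) ≤ R * D := by
              have e1 : k * (D + 2 * ρ) = (k * (k + 3)) * ρ := by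
                rw [hDdef]; ring
              have e2 : (k + 2) * D = ((k + 2) * (k + 1)) * ρ := by
                rw [hDdef]; ring
              have e3 : k * (k + 3) ≤ (k + 2) * (k + 1) := by nlinarith
              have e4 : (k + 2) * D ≤ R * D := Nat.mul_le_mul_right _ (by omega)
              calc k * (D + 2 * ρ) = (k * (k + 3)) * ρ := e1
                _ ≤ ((k + 2) * (k + 1)) * ρ := Nat.mul_le_mul_right _ e3
                _ = (k + 2) * D := e2.symm
                _ ≤ R * D := e4
            omega
  -- conclude
  refine ⟨A, hAfin, hAtop, ?_⟩
  have hdepth : (n : ℕ∞) ≤ depth A g₀ := by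
    rw [depth]
    refine le_sInf ?_
    rintro b ⟨g', hg', rfl⟩
    simp only [Set.mem_setOf_eq] at hg'
    have : ¬ wl A (g₀⁻¹ * g') < n := by
      intro hcon
      have := hnbr g' hcon
      omega
    have hge : n ≤ wdist A g₀ g' := by
      rw [wdist]; omega
    show (n : ℕ∞) ≤ (wdist A g₀ g' : ℕ∞)
    exact_mod_cast hge
  exact le_trans hdepth (le_iSup (fun g => depth A g) g₀)
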